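/- arXiv:2601.02120 — 2 statements merged into one kernel-verified Lean document; each statement's English description precedes it below -/
import Mathlib

section
/- Let S be a commutative semiring, T a submonoid of S, and L a localization of S at T with canonical map f : S → L. Let I be a k-primary ideal of S with R_k(I) ∩ T = ∅, and suppose the extension T⁻¹I is a k-strongly irreducible ideal of L. Then I is a k-strongly irreducible ideal of S. -/
/-- An ideal `I` of a commutative semiring is *subtractive* (a `k`-ideal) if
`x + y ∈ I` and `y ∈ I` imply `x ∈ I`. -/
def Ideal.IsSubtractive {S : Type*} [CommSemiring S] (I : Ideal S) : Prop :=
  ∀ x y : S, x + y ∈ I → y ∈ I → x ∈ I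

/-- A subtractive ideal `I` is *`k`-strongly irreducible* if for all subtractive
ideals `A`, `B`, `A ∩ B ⊆ I` implies `A ⊆ I` or `B ⊆ I`. -/
def Ideal.IsKStronglyIrreducible {S : Type*} [CommSemiring S] (I : Ideal S) : Prop :=
  I.IsSubtractive ∧
    ∀ A B : Ideal S, A.IsSubtractive → B.IsSubtractive → A ⊓ B ≤ I → A ≤ I ∨ B ≤ I

/-- A *`k`-prime* ideal is a proper subtractive ideal `P` with
`a·b ∈ P → a ∈ P ∨ b ∈ P`. -/
def Ideal.IsKPrime {S : Type*} [CommSemiring S] (P : Ideal S) : Prop :=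
  P ≠ ⊤ ∧ P.IsSubtractive ∧ ∀ a b : S, a * b ∈ P → a ∈ P ∨ b ∈ P

/-- The *`k`-radical* of an ideal `I`: the intersection of all `k`-prime ideals
containing `I`. -/
def Ideal.kRadical {S : Type*} [CommSemiring S] (I : Ideal S) : Ideal S :=
  sInf {P : Ideal S | P.IsKPrime ∧ I ≤ P}

/-- A *`k`-primary* ideal is a subtractive ideal `I` with
`a·b ∈ I → a ∉ I → bⁿ ∈ I` for some `n ≥ 1`. -/
def Ideal.IsKPrimary {S : Type*} [CommSemiring S] (I : Ideal S) : Prop :=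
  I.IsSubtractive ∧ ∀ a b : S, a * b ∈ I → a ∉ I → ∃ n : ℕ, 1 ≤ n ∧ b ^ n ∈ I

lemma kprime_of_pow_mem {S : Type*} [CommSemiring S] {P : Ideal S} (hP : P.IsKPrime)
    {b : S} : ∀ n : ℕ, 1 ≤ n → b ^ n ∈ P → b ∈ P := by
  intro n
  induction n with
  | zero => omega
  | succ m ih =>
    intro _ hmem
    rcases Nat.eq_or_lt_of_le (Nat.zero_le m) with h0 | h0
    · simpa [← h0] using hmem
    · rw [pow_succ] at hmem
      rcases hP.2.2 _ _ hmem with h | h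
      · exact ih h0 h
      · exact h

/-- Contraction of the extension of `I` is `I`. -/
lemma mem_of_algebraMap_mem {S : Type*} [CommSemiring S]
    (T : Submonoid S) (L : Type*) [CommSemiring L] [Algebra S L] [IsLocalization T L]
    (I : Ideal S) (hI : I.IsKPrimary)
    (hdisj : (I.kRadical : Set S) ∩ (T : Set S) = ∅)
    {x : S} (hx : algebraMap S L x ∈ Ideal.map (algebraMap S L) I) : x ∈ I := by
  rw [IsLocalization.mem_map_algebraMap_iff T] at hx
  obtain ⟨⟨⟨a, ha⟩, t⟩, h⟩ := hx
  rw [← map_mul] at h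
  rw [IsLocalization.eq_iff_exists T] at h
  obtain ⟨c, hc⟩ := h
  have hin : x * (↑c * ↑t) ∈ I := by
    have : (↑c : S) * a ∈ I := I.mul_mem_left _ ha
    rw [show x * (↑c * ↑t) = ↑c * (x * ↑t) by ring, hc]
    exact this
  by_contra hxI
  obtain ⟨n, hn1, hn⟩ := hI.2 _ _ hin hxI
  have hrad : (↑c * ↑t : S) ∈ I.kRadical := by
    rw [Ideal.kRadical, Ideal.mem_sInf]
    rintro P ⟨hP, hIP⟩
    exact kprime_of_pow_mem hP n hn1 (hIP hn)
  have hT : (↑c * ↑t : S) ∈ T := T.mul_mem c.2 t.2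
  have : (↑c * ↑t : S) ∈ (I.kRadical : Set S) ∩ (T : Set S) := ⟨hrad, hT⟩
  rw [hdisj] at this
  exact this

/-- Extensions of subtractive ideals are subtractive. -/
lemma map_isSubtractive {S : Type*} [CommSemiring S]
    (T : Submonoid S) (L : Type*) [CommSemiring L] [Algebra S L] [IsLocalization T L]
    {A : Ideal S} (hA : A.IsSubtractive) :
    (Ideal.map (algebraMap S L) A).IsSubtractive := by
  intro x y hxy hy
  rw [IsLocalization.mem_map_algebraMap_iff T] at hxy hy ⊢
  obtain ⟨⟨⟨a, ha⟩, t⟩, h1⟩ := hxy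
  obtain ⟨⟨⟨b, hb⟩, u⟩, h2⟩ := hy
  obtain ⟨⟨p, q⟩, h3⟩ := IsLocalization.surj T x
  -- h1 : (x + y) * f t = f a,  h2 : y * f u = f b,  h3 : x * f q = f p
  have key : algebraMap S L (p * ↑t * ↑u + b * ↑t * ↑q) = algebraMap S L (a * ↑u * ↑q) := by
    have e1 : algebraMap S L (p * ↑t * ↑u) = x * algebraMap S L (↑q * ↑t * ↑u) := by
      rw [map_mul, map_mul, ← h3, map_mul, map_mul]; ring
    have e2 : algebraMap S L (b * ↑t * ↑q) = y * algebraMap S L (↑u * ↑t * ↑q) := by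
      rw [map_mul, map_mul, ← h2, map_mul, map_mul]; ring
    have e3 : algebraMap S L (a * ↑u * ↑q) = (x + y) * algebraMap S L (↑t * ↑u * ↑q) := by
      rw [map_mul, map_mul, ← h1, map_mul, map_mul]; ring
    rw [map_add, e1, e2, e3, map_mul, map_mul, map_mul, map_mul, map_mul, map_mul]
    ring
  rw [IsLocalization.eq_iff_exists T] at key
  obtain ⟨c, hc⟩ := key
  have hmemA : ↑c * (p * ↑t * ↑u) ∈ A := by
    apply hA _ (↑c * (b * ↑t * ↑q))
    · rw [← mul_add, hc]
      exact A.mul_mem_left _ (A.mul_mem_right _ (A.mul_mem_right _ ha))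
    · exact A.mul_mem_left _ (A.mul_mem_right _ (A.mul_mem_right _ hb))
  refine ⟨⟨⟨↑c * (p * ↑t * ↑u), hmemA⟩, ⟨↑c * (↑q * ↑t * ↑u), T.mul_mem c.2
    (T.mul_mem (T.mul_mem q.2 t.2) u.2)⟩⟩, ?_⟩
  simp only [map_mul, ← h3]
  ring

/-- If `I` is a `k`-primary ideal of `S` with `R_k(I) ∩ T = ∅` and the extension
`T⁻¹I` is `k`-strongly irreducible in the localization `L`, then `I` is
`k`-strongly irreducible in `S`. -/
theorem kStronglyIrreducible_of_localization {S : Type*} [CommSemiring S]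
    (T : Submonoid S) (L : Type*) [CommSemiring L] [Algebra S L] [IsLocalization T L]
    (I : Ideal S) (hI : I.IsKPrimary)
    (hdisj : (I.kRadical : Set S) ∩ (T : Set S) = ∅)
    (hext : (Ideal.map (algebraMap S L) I).IsKStronglyIrreducible) :
    I.IsKStronglyIrreducible := by
  refine ⟨hI.1, fun A B hA hB hle => ?_⟩
  have hmap : Ideal.map (algebraMap S L) A ⊓ Ideal.map (algebraMap S L) B ≤
      Ideal.map (algebraMap S L) I := by
    intro z hz
    obtain ⟨hzA, hzB⟩ := Submodule.mem_inf.mp hz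
    rw [IsLocalization.mem_map_algebraMap_iff T] at hzA hzB
    obtain ⟨⟨⟨a, ha⟩, t⟩, h1⟩ := hzA
    obtain ⟨⟨⟨b, hb⟩, u⟩, h2⟩ := hzB
    -- h1 : z * f t = f a, h2 : z * f u = f b
    have key : algebraMap S L (a * ↑u) = algebraMap S L (b * ↑t) := by
      rw [map_mul, map_mul, ← h1, ← h2]; ring
    rw [IsLocalization.eq_iff_exists T] at key
    obtain ⟨c, hc⟩ := key
    have hmem : ↑c * (a * ↑u) ∈ I := by
      apply hle
      constructor
      · exact A.mul_mem_left _ (A.mul_mem_right _ ha)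
      · rw [hc]; exact B.mul_mem_left _ (B.mul_mem_right _ hb)
    rw [IsLocalization.mem_map_algebraMap_iff T]
    refine ⟨⟨⟨↑c * (a * ↑u), hmem⟩, ⟨↑c * (↑t * ↑u), T.mul_mem c.2 (T.mul_mem t.2 u.2)⟩⟩, ?_⟩
    simp only [map_mul, ← h1]
    ring
  rcases hext.2 _ _ (map_isSubtractive T L hA) (map_isSubtractive T L hB) hmap with h | h
  · exact Or.inl fun x hx => mem_of_algebraMap_mem T L I hI hdisj
      (h (Ideal.mem_map_of_mem _ hx))
  · exact Or.inr fun x hx => mem_of_algebraMap_mem T L I hI hdisj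
      (h (Ideal.mem_map_of_mem _ hx))
end

section
/- Let I be a proper k-strongly irreducible ideal of a commutative semiring S. Then I is prime (for all a, b ∈ S, a·b ∈ I implies a ∈ I or b ∈ I) if and only if I = R_k(I). -/
/-- The subtractive (k-)closure of an ideal. -/
def Ideal.kClosure {S : Type*} [CommSemiring S] (J : Ideal S) : Ideal S where
  carrier := {x | ∃ y ∈ J, x + y ∈ J}
  zero_mem' := ⟨0, J.zero_mem, by simpa using J.zero_mem⟩
  add_mem' := by
    rintro a b ⟨y, hy, hay⟩ ⟨z, hz, hbz⟩
    exact ⟨y + z, J.add_mem hy hz, by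
      have : (a + y) + (b + z) ∈ J := J.add_mem hay hbz
      convert this using 1; ring⟩
  smul_mem' := by
    rintro s a ⟨y, hy, hay⟩
    exact ⟨s * y, J.mul_mem_left s hy, by
      have : s * (a + y) ∈ J := J.mul_mem_left s hay
      simpa [mul_add] using this⟩

theorem Ideal.le_kClosure {S : Type*} [CommSemiring S] (J : Ideal S) : J ≤ J.kClosure :=
  fun x hx => ⟨0, J.zero_mem, by simpa using hx⟩

theorem Ideal.kClosure_isSubtractive {S : Type*} [CommSemiring S] (J : Ideal S) :
    J.kClosure.IsSubtractive := by
  rintro x y ⟨u, hu, hxyu⟩ ⟨v, hv, hyv⟩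
  refine ⟨y + v + u, ?_, ?_⟩
  · exact J.add_mem hyv hu
  · show x + (y + v + u) ∈ J
    have : (x + y + u) + v ∈ J := J.add_mem hxyu hv
    convert this using 1; ring

theorem Ideal.kClosure_le {S : Type*} [CommSemiring S] {J P : Ideal S}
    (hP : P.IsSubtractive) (h : J ≤ P) : J.kClosure ≤ P := by
  rintro x ⟨y, hy, hxy⟩
  exact hP x y (h hxy) (h hy)

/-- A proper `k`-strongly irreducible ideal `I` is prime if and only if
`I = R_k(I)`. -/
theorem kStronglyIrreducible_prime_iff_kRadical {S : Type*} [CommSemiring S]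
    (I : Ideal S) (hIproper : I ≠ ⊤) (hIsub : I.IsSubtractive)
    (hIsi : ∀ A B : Ideal S, A.IsSubtractive → B.IsSubtractive → A ⊓ B ≤ I → A ≤ I ∨ B ≤ I) :
    (∀ a b : S, a * b ∈ I → a ∈ I ∨ b ∈ I) ↔ I = I.kRadical := by
  constructor
  · intro hprime
    refine le_antisymm (le_sInf fun P hP => hP.2) (sInf_le ⟨⟨hIproper, hIsub, hprime⟩, le_rfl⟩)
  · intro hrad a b hab
    set A := (I ⊔ Ideal.span {a}).kClosure with hA
    set B := (I ⊔ Ideal.span {b}).kClosure with hB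
    have hAB : A ⊓ B ≤ I := by
      rw [hrad]
      refine le_sInf fun P hP => ?_
      rcases hP.1.2.2 a b (hP.2 hab) with h | h
      · exact inf_le_left.trans (Ideal.kClosure_le hP.1.2.1
          (sup_le hP.2 ((Ideal.span_singleton_le_iff_mem P).mpr h)))
      · exact inf_le_right.trans (Ideal.kClosure_le hP.1.2.1
          (sup_le hP.2 ((Ideal.span_singleton_le_iff_mem P).mpr h)))
    rcases hIsi A B (Ideal.kClosure_isSubtractive _) (Ideal.kClosure_isSubtractive _) hAB with
      h | h
    · exact Or.inl (h (Ideal.le_kClosure _ (Ideal.mem_sup_right (Ideal.subset_span rfl))))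
    · exact Or.inr (h (Ideal.le_kClosure _ (Ideal.mem_sup_right (Ideal.subset_span rfl))))
end
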